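/- arXiv:1609.04609 — 10 statements merged into one kernel-verified Lean document; each statement's English description precedes it below -/
import Mathlib

section
/- Let Q be a (not necessarily unital) associative ring and let (R, L) be an orthogonal pair of Q. Then (rann(lann(R)), lann(R)) is a maximal orthogonal pair of Q containing (R, L). -/
/-- A right ideal of a (not necessarily unital) ring: an additive subgroup `R` with `RQ ⊆ R`. -/
def IsRightIdeal {Q : Type*} [NonUnitalRing Q] (R : AddSubgroup Q) : Prop :=
  ∀ r ∈ R, ∀ x : Q, r * x ∈ R

/-- A left ideal of a (not necessarily unital) ring: an additive subgroup `L` with `QL ⊆ L`. -/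
def IsLeftIdeal {Q : Type*} [NonUnitalRing Q] (L : AddSubgroup Q) : Prop :=
  ∀ l ∈ L, ∀ x : Q, x * l ∈ L

/-- The left annihilator of a subset `S`, as an additive subgroup. -/
def lannG {Q : Type*} [NonUnitalRing Q] (S : Set Q) : AddSubgroup Q where
  carrier := {a : Q | ∀ s ∈ S, a * s = 0}
  zero_mem' := by intro s _; simp
  add_mem' := by intro a b ha hb s hs; rw [add_mul, ha s hs, hb s hs, add_zero]
  neg_mem' := by intro a ha s hs; rw [neg_mul, ha s hs, neg_zero]

/-- The right annihilator of a subset `S`, as an additive subgroup. -/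
def rannG {Q : Type*} [NonUnitalRing Q] (S : Set Q) : AddSubgroup Q where
  carrier := {a : Q | ∀ s ∈ S, s * a = 0}
  zero_mem' := by intro s _; simp
  add_mem' := by intro a b ha hb s hs; rw [mul_add, ha s hs, hb s hs, add_zero]
  neg_mem' := by intro a ha s hs; rw [mul_neg, ha s hs, neg_zero]

/-- An orthogonal pair: a nonzero right ideal `R` and a nonzero left ideal `L` with `LR = 0`. -/
def IsOrthPair {Q : Type*} [NonUnitalRing Q] (R L : AddSubgroup Q) : Prop :=
  IsRightIdeal R ∧ IsLeftIdeal L ∧ R ≠ ⊥ ∧ L ≠ ⊥ ∧ ∀ l ∈ L, ∀ r ∈ R, l * r = 0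

/-- A maximal orthogonal pair (with respect to componentwise inclusion). -/
def IsMaxOrthPair {Q : Type*} [NonUnitalRing Q] (R L : AddSubgroup Q) : Prop :=
  IsOrthPair R L ∧
    ∀ R' L' : AddSubgroup Q, IsOrthPair R' L' → R ≤ R' → L ≤ L' → R = R' ∧ L = L'

/-- Proposition 3.4(i), first part: `(rann(lann(R)), lann(R))` is a maximal orthogonal pair
containing the orthogonal pair `(R, L)`. -/
theorem maxOrthPair_of_rann_lann {Q : Type*} [NonUnitalRing Q]
    (R L : AddSubgroup Q) (h : IsOrthPair R L) :
    IsMaxOrthPair (rannG ((lannG (R : Set Q) : AddSubgroup Q) : Set Q)) (lannG (R : Set Q)) ∧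
      R ≤ rannG ((lannG (R : Set Q) : AddSubgroup Q) : Set Q) ∧ L ≤ lannG (R : Set Q) := by
  obtain ⟨hR, hL, hRne, hLne, horth⟩ := h
  set A := lannG (R : Set Q) with hA
  set B := rannG ((A : AddSubgroup Q) : Set Q) with hB
  have hRB : R ≤ B := fun r hr a ha => ha r hr
  have hLA : L ≤ A := fun l hl r hr => horth l hl r hr
  refine ⟨⟨⟨?_, ?_, ?_, ?_, ?_⟩, ?_⟩, hRB, hLA⟩
  · -- B is a right ideal
    intro b hb x a ha
    rw [← mul_assoc, hb a ha, zero_mul]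
  · -- A is a left ideal
    intro a ha x r hr
    rw [mul_assoc, ha r hr, mul_zero]
  · -- B ≠ ⊥
    intro hbot
    exact hRne (le_bot_iff.mp (hbot ▸ hRB))
  · -- A ≠ ⊥
    intro hbot
    exact hLne (le_bot_iff.mp (hbot ▸ hLA))
  · -- A · B = 0
    intro a ha b hb
    exact hb a ha
  · -- maximality
    intro R' L' ⟨hR', hL', _, _, horth'⟩ hBR' hAL'
    have hL'A : L' ≤ A := by
      intro l hl r hr
      exact horth' l hl r (hBR' (hRB hr))
    have hAL'eq : A = L' := le_antisymm hAL' hL'A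
    have hR'B : R' ≤ B := by
      intro r hr a ha
      exact horth' a (hAL' ha) r hr
    exact ⟨le_antisymm hBR' hR'B, le_antisymm hAL' hL'A⟩
end

section
/- Let Q be a (not necessarily unital) associative ring and let (R, L) be an orthogonal pair of Q. Then (rann(L), lann(rann(L))) is a maximal orthogonal pair of Q containing (R, L). -/
/-- Proposition 3.4(i), second part: `(rann(L), lann(rann(L)))` is a maximal orthogonal pair
containing the orthogonal pair `(R, L)`. -/
theorem maxOrthPair_of_lann_rann {Q : Type*} [NonUnitalRing Q]
    (R L : AddSubgroup Q) (h : IsOrthPair R L) :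
    IsMaxOrthPair (rannG (L : Set Q)) (lannG ((rannG (L : Set Q) : AddSubgroup Q) : Set Q)) ∧
      R ≤ rannG (L : Set Q) ∧ L ≤ lannG ((rannG (L : Set Q) : AddSubgroup Q) : Set Q) := by
  obtain ⟨hR, hL, hRne, hLne, horth⟩ := h
  set R' := rannG (L : Set Q) with hR'def
  set L' := lannG ((R' : AddSubgroup Q) : Set Q) with hL'def
  have hRsub : R ≤ R' := fun r hr l hl => horth l hl r hr
  have hLsub : L ≤ L' := fun l hl a ha => ha l hl
  have hR'ideal : IsRightIdeal R' := by
    intro r hr x l hl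
    rw [← mul_assoc, hr l hl, zero_mul]
  have hL'ideal : IsLeftIdeal L' := by
    intro l hl x a ha
    rw [mul_assoc, hl a ha, mul_zero]
  have hR'ne : R' ≠ ⊥ := fun hb => hRne (le_bot_iff.mp (hb ▸ hRsub))
  have hL'ne : L' ≠ ⊥ := fun hb => hLne (le_bot_iff.mp (hb ▸ hLsub))
  refine ⟨⟨⟨hR'ideal, hL'ideal, hR'ne, hL'ne, fun l hl r hr => hl r hr⟩, ?_⟩, hRsub, hLsub⟩
  intro R'' L'' ⟨_, _, _, _, horth''⟩ hR'' hL''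
  have hR'eq : R' = R'' := by
    refine le_antisymm hR'' (fun r hr l hl => horth'' l (hL'' (hLsub hl)) r hr)
  constructor
  · exact hR'eq
  · refine le_antisymm hL'' (fun l hl a ha => horth'' l hl a (hR'eq ▸ hR'' ha))
end

section
/- Let Q be a (not necessarily unital) associative ring and let B be an additive subgroup of Q. Then the following are equivalent: (i) BQB ⊆ B and B² = 0 (i.e., b·x·b' ∈ B and b·b' = 0 for all b, b' ∈ B, x ∈ Q); (ii) there exist a left ideal L of Q and a right ideal R of Q such that RL ⊆ B ⊆ R ∩ L and LR = 0 (i.e., r·l ∈ B for all r ∈ R, l ∈ L, and l·r = 0 for all l ∈ L, r ∈ R). -/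
/-! For (i) ⇒ (ii) take `L = B + QB` and `R = B + BQ`. Multiplication is biadditive, so
`RL ⊆ B` and `LR = 0` need only be checked on generators, where associativity reduces them to
`BQB ⊆ B` and `B² = 0`. The converse is immediate: `BQB ⊆ (RQ)L ⊆ RL` and `BB ⊆ LR`. -/

open Set Pointwise

namespace AddSubgroup

section NonAssoc

variable {Q : Type*} [NonUnitalNonAssocRing Q]

theorem mul_mem_of_mem_closure {S T : Set Q} {B : AddSubgroup Q}
    (h : ∀ s ∈ S, ∀ t ∈ T, s * t ∈ B) {x y : Q} (hx : x ∈ closure S) (hy : y ∈ closure T) :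
    x * y ∈ B :=
  have hS : ∀ t ∈ T, closure S ≤ B.comap (AddMonoidHom.mulRight t) :=
    fun t ht => (closure_le _).2 fun s hs => h s hs t ht
  (closure_le (B.comap (AddMonoidHom.mulLeft x))).2 (fun t ht => hS t ht hx) hy

end NonAssoc

section Assoc

variable {Q : Type*} [NonUnitalRing Q] {B : AddSubgroup Q}

theorem isLeftIdeal_closure {S : Set Q} (h : ∀ s ∈ S, ∀ x : Q, x * s ∈ closure S) :
    IsLeftIdeal (closure S) :=
  fun _ hl x => mul_mem_of_mem_closure (S := univ) (fun x _ s hs => h s hs x)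
    (mem_closure_of_mem (mem_univ x)) hl

theorem isRightIdeal_closure {S : Set Q} (h : ∀ s ∈ S, ∀ x : Q, s * x ∈ closure S) :
    IsRightIdeal (closure S) :=
  fun _ hr x => mul_mem_of_mem_closure (T := univ) (fun s hs x _ => h s hs x)
    hr (mem_closure_of_mem (mem_univ x))


def leftIdealSpan (B : AddSubgroup Q) : AddSubgroup Q :=
  closure ((B : Set Q) ∪ (univ : Set Q) * B)

def rightIdealSpan (B : AddSubgroup Q) : AddSubgroup Q :=
  closure ((B : Set Q) ∪ (B : Set Q) * univ)

theorem le_leftIdealSpan (B : AddSubgroup Q) : B ≤ B.leftIdealSpan :=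
  fun _ hb => subset_closure (Or.inl hb)

theorem le_rightIdealSpan (B : AddSubgroup Q) : B ≤ B.rightIdealSpan :=
  fun _ hb => subset_closure (Or.inl hb)

theorem isLeftIdeal_leftIdealSpan (B : AddSubgroup Q) : IsLeftIdeal B.leftIdealSpan := by
  refine isLeftIdeal_closure fun s hs x => subset_closure (Or.inr ?_)
  rcases hs with hb | ⟨y, -, b, hb, rfl⟩
  · exact mem_mul.2 ⟨x, mem_univ x, s, hb, rfl⟩
  · exact mem_mul.2 ⟨x * y, mem_univ _, b, hb, mul_assoc x y b⟩

theorem isRightIdeal_rightIdealSpan (B : AddSubgroup Q) : IsRightIdeal B.rightIdealSpan := by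
  refine isRightIdeal_closure fun s hs x => subset_closure (Or.inr ?_)
  rcases hs with hb | ⟨b, hb, y, -, rfl⟩
  · exact mem_mul.2 ⟨s, hb, x, mem_univ x, rfl⟩
  · exact mem_mul.2 ⟨b, hb, y * x, mem_univ _, (mul_assoc b y x).symm⟩

theorem mul_mem_of_mem_rightIdealSpan_of_mem_leftIdealSpan
    (hBQB : ∀ b ∈ B, ∀ x : Q, ∀ b' ∈ B, b * x * b' ∈ B) (hBB : ∀ b ∈ B, ∀ b' ∈ B, b * b' = 0)
    {r l : Q} (hr : r ∈ B.rightIdealSpan) (hl : l ∈ B.leftIdealSpan) : r * l ∈ B := by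
  refine mul_mem_of_mem_closure (fun s hs t ht => ?_) hr hl
  rcases hs with hb | ⟨b, hb, x, -, rfl⟩ <;> rcases ht with hb' | ⟨y, -, b', hb', rfl⟩
  · rw [hBB s hb t hb']
    exact B.zero_mem
  · rw [← mul_assoc]
    exact hBQB s hb y b' hb'
  · exact hBQB b hb x t hb'
  · rw [← mul_assoc, mul_assoc b]
    exact hBQB b hb (x * y) b' hb'

theorem mul_eq_zero_of_mem_leftIdealSpan_of_mem_rightIdealSpan
    (hBB : ∀ b ∈ B, ∀ b' ∈ B, b * b' = 0)
    {l r : Q} (hl : l ∈ B.leftIdealSpan) (hr : r ∈ B.rightIdealSpan) : l * r = 0 := by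
  refine mem_bot.1 (mul_mem_of_mem_closure (fun s hs t ht => mem_bot.2 ?_) hl hr)
  rcases hs with hb | ⟨x, -, b, hb, rfl⟩ <;> rcases ht with hb' | ⟨b', hb', y, -, rfl⟩
  · exact hBB s hb t hb'
  · rw [← mul_assoc, hBB s hb b' hb', zero_mul]
  · rw [mul_assoc, hBB b hb t hb', mul_zero]
  · rw [mul_assoc, ← mul_assoc b, hBB b hb b' hb', zero_mul, mul_zero]

end Assoc

end AddSubgroup

open AddSubgroup in
/-- Proposition 3.5: for an additive subgroup `B` of `Q`, `BQB ⊆ B` and `B² = 0` hold if and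
only if there are a left ideal `L` and a right ideal `R` with `RL ⊆ B ⊆ R ∩ L` and `LR = 0`. -/
theorem regular_inner_ideal_iff {Q : Type*} [NonUnitalRing Q] (B : AddSubgroup Q) :
    ((∀ b ∈ B, ∀ x : Q, ∀ b' ∈ B, b * x * b' ∈ B) ∧ (∀ b ∈ B, ∀ b' ∈ B, b * b' = 0)) ↔
    (∃ L R : AddSubgroup Q, IsLeftIdeal L ∧ IsRightIdeal R ∧
      (∀ r ∈ R, ∀ l ∈ L, r * l ∈ B) ∧ (B : Set Q) ⊆ (R : Set Q) ∩ (L : Set Q) ∧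
      (∀ l ∈ L, ∀ r ∈ R, l * r = 0)) := by
  constructor
  · rintro ⟨hBQB, hBB⟩
    exact ⟨B.leftIdealSpan, B.rightIdealSpan, isLeftIdeal_leftIdealSpan B,
      isRightIdeal_rightIdealSpan B,
      fun r hr l hl => mul_mem_of_mem_rightIdealSpan_of_mem_leftIdealSpan hBQB hBB hr hl,
      fun b hb => ⟨le_rightIdealSpan B hb, le_leftIdealSpan B hb⟩,
      fun l hl r hr => mul_eq_zero_of_mem_leftIdealSpan_of_mem_rightIdealSpan hBB hl hr⟩
  · rintro ⟨L, R, hL, hR, hRL, hB, hLR⟩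
    exact ⟨fun b hb x b' hb' => hRL _ (hR b (hB hb).1 x) b' (hB hb').2,
      fun b hb b' hb' => hLR b (hB hb).2 b' (hB hb').1⟩
end

section
/- Let Q be a von Neumann regular (not necessarily unital) associative ring, i.e., for every a ∈ Q there exists x ∈ Q with a = axa, and let (R, L) be an orthogonal pair of Q. Then the additive subgroup generated by the products {r·l : r ∈ R, l ∈ L} equals R ∩ L. Consequently, B = R ∩ L is the unique additive subgroup of Q satisfying RL ⊆ B ⊆ R ∩ L. -/
/-- 3.6(iii): in a von Neumann regular ring, for an orthogonal pair `(R, L)` we have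
`RL = R ∩ L`, and hence `R ∩ L` is the unique additive subgroup `B` with `RL ⊆ B ⊆ R ∩ L`. -/
theorem regInner_unique_of_vonNeumann {Q : Type*} [NonUnitalRing Q]
    (hvn : ∀ a : Q, ∃ x : Q, a = a * x * a)
    (R L : AddSubgroup Q) (h : IsOrthPair R L) :
    AddSubgroup.closure {x : Q | ∃ r ∈ R, ∃ l ∈ L, x = r * l} = R ⊓ L ∧
      ∀ B : AddSubgroup Q, (∀ r ∈ R, ∀ l ∈ L, r * l ∈ B) →
        (B : Set Q) ⊆ (R : Set Q) ∩ (L : Set Q) → B = R ⊓ L := by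
  obtain ⟨hR, hL, -, -, -⟩ := h
  have hmain : AddSubgroup.closure {x : Q | ∃ r ∈ R, ∃ l ∈ L, x = r * l} = R ⊓ L := by
    apply le_antisymm
    · rw [AddSubgroup.closure_le]
      rintro x ⟨r, hr, l, hl, rfl⟩
      exact ⟨hR r hr l, hL l hl r⟩
    · rintro a ⟨haR, haL⟩
      obtain ⟨x, hx⟩ := hvn a
      apply AddSubgroup.subset_closure
      exact ⟨a * x, hR a haR x, a, haL, hx⟩
  refine ⟨hmain, fun B hB1 hB2 => le_antisymm ?_ ?_⟩
  · intro b hb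
    exact (hB2 hb : _)
  · rw [← hmain, AddSubgroup.closure_le]
    rintro x ⟨r, hr, l, hl, rfl⟩
    exact hB1 r hr l hl
end

section
/- Let Q be a prime (not necessarily unital) associative ring whose core H (the intersection of all nonzero two-sided ideals of Q) is nonzero, and let (R, L) be an orthogonal pair of Q. Then the additive subgroup generated by the products {l·h·r : l ∈ L, h ∈ H, r ∈ R} equals H. -/
/-- A two-sided ideal: an additive subgroup `I` with `QI ⊆ I` and `IQ ⊆ I`. -/
def IsTwoSidedIdealSub {Q : Type*} [NonUnitalRing Q] (I : AddSubgroup Q) : Prop :=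
  (∀ a ∈ I, ∀ x : Q, x * a ∈ I) ∧ (∀ a ∈ I, ∀ x : Q, a * x ∈ I)

/-- The core of `Q`: the intersection of all nonzero two-sided ideals of `Q`. -/
def ringCore (Q : Type*) [NonUnitalRing Q] : AddSubgroup Q :=
  sInf {I : AddSubgroup Q | IsTwoSidedIdealSub I ∧ I ≠ ⊥}

/-- A (not necessarily unital) ring is prime if `aQb = 0` implies `a = 0` or `b = 0`. -/
def IsPrimeRing (Q : Type*) [NonUnitalRing Q] : Prop :=
  ∀ a b : Q, (∀ x : Q, a * x * b = 0) → a = 0 ∨ b = 0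

/-- For subsets `A`, `C` of `Q`, the additive subgroup generated by all products `a * c`. -/
def setMul {Q : Type*} [NonUnitalRing Q] (A C : Set Q) : AddSubgroup Q :=
  AddSubgroup.closure {x : Q | ∃ a ∈ A, ∃ c ∈ C, x = a * c}

/-! Since `L` is a left and `R` a right ideal, `LHR` is a two-sided ideal, contained in the ideal `H`.
For nonzero `l ∈ L`, `h ∈ H`, `r ∈ R`, primeness applied twice gives `x`, `z` with `l (x h z) r ≠ 0`,
so `LHR ≠ 0`, and minimality of the core gives `H ⊆ LHR`. -/

section

variable {Q : Type*} [NonUnitalRing Q]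

lemma isTwoSidedIdealSub_ringCore : IsTwoSidedIdealSub (ringCore Q) := by
  refine ⟨fun a ha x => ?_, fun a ha x => ?_⟩ <;>
    rw [ringCore, AddSubgroup.mem_sInf] at ha ⊢ <;> intro I hI
  · exact hI.1.1 a (ha I hI) x
  · exact hI.1.2 a (ha I hI) x

lemma ringCore_le {I : AddSubgroup Q} (hI : IsTwoSidedIdealSub I) (hI0 : I ≠ ⊥) :
    ringCore Q ≤ I :=
  sInf_le ⟨hI, hI0⟩

lemma isTwoSidedIdealSub_closure {S : Set Q} (hleft : ∀ s ∈ S, ∀ x : Q, x * s ∈ S)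
    (hright : ∀ s ∈ S, ∀ x : Q, s * x ∈ S) : IsTwoSidedIdealSub (AddSubgroup.closure S) :=
  ⟨fun _ ha x => (AddSubgroup.closure_le
      (K := (AddSubgroup.closure S).comap (AddMonoidHom.mulLeft x))).mpr
      (fun s hs => AddSubgroup.subset_closure (hleft s hs x)) ha,
    fun _ ha x => (AddSubgroup.closure_le
      (K := (AddSubgroup.closure S).comap (AddMonoidHom.mulRight x))).mpr
      (fun s hs => AddSubgroup.subset_closure (hright s hs x)) ha⟩

lemma IsPrimeRing.exists_mul_mul_ne_zero (hQ : IsPrimeRing Q) {a b : Q} (ha : a ≠ 0)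
    (hb : b ≠ 0) : ∃ x, a * x * b ≠ 0 := by
  by_contra! h
  exact (hQ a b h).elim ha hb

lemma IsPrimeRing.exists_mul_mul_mul_mul_ne_zero (hQ : IsPrimeRing Q) {a b c : Q} (ha : a ≠ 0)
    (hb : b ≠ 0) (hc : c ≠ 0) : ∃ x z, a * (x * b * z) * c ≠ 0 := by
  obtain ⟨x, hx⟩ := hQ.exists_mul_mul_ne_zero ha hb
  obtain ⟨z, hz⟩ := hQ.exists_mul_mul_ne_zero hx hc
  exact ⟨x, z, by simpa only [mul_assoc] using hz⟩

section TripleProduct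

variable {L H R : AddSubgroup Q}

lemma isTwoSidedIdealSub_closure_triple (hL : IsLeftIdeal L) (hR : IsRightIdeal R) :
    IsTwoSidedIdealSub
      (AddSubgroup.closure {x : Q | ∃ l ∈ L, ∃ y ∈ H, ∃ r ∈ R, x = l * y * r}) := by
  refine isTwoSidedIdealSub_closure ?_ ?_
  · rintro _ ⟨l, hl, y, hy, r, hr, rfl⟩ x
    exact ⟨x * l, hL l hl x, y, hy, r, hr, by simp only [mul_assoc]⟩
  · rintro _ ⟨l, hl, y, hy, r, hr, rfl⟩ x
    exact ⟨l, hl, y, hy, r * x, hR r hr x, by simp only [mul_assoc]⟩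

lemma closure_triple_le (hH : IsTwoSidedIdealSub H) :
    AddSubgroup.closure {x : Q | ∃ l ∈ L, ∃ y ∈ H, ∃ r ∈ R, x = l * y * r} ≤ H := by
  rw [AddSubgroup.closure_le]
  rintro _ ⟨l, -, y, hy, r, -, rfl⟩
  exact hH.2 _ (hH.1 y hy l) r

lemma closure_triple_ne_bot (hQ : IsPrimeRing Q) (hH : IsTwoSidedIdealSub H) (hL0 : L ≠ ⊥)
    (hH0 : H ≠ ⊥) (hR0 : R ≠ ⊥) :
    AddSubgroup.closure {x : Q | ∃ l ∈ L, ∃ y ∈ H, ∃ r ∈ R, x = l * y * r} ≠ ⊥ := by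
  obtain ⟨l, hl, hl0⟩ := L.bot_or_exists_ne_zero.resolve_left hL0
  obtain ⟨y, hy, hy0⟩ := H.bot_or_exists_ne_zero.resolve_left hH0
  obtain ⟨r, hr, hr0⟩ := R.bot_or_exists_ne_zero.resolve_left hR0
  obtain ⟨x, z, hxz⟩ := hQ.exists_mul_mul_mul_mul_ne_zero hl0 hy0 hr0
  have hxyz : x * y * z ∈ H := hH.2 _ (hH.1 y hy x) z
  refine fun hbot => hxz ?_
  rw [← AddSubgroup.mem_bot, ← hbot]
  exact AddSubgroup.subset_closure ⟨l, hl, _, hxyz, r, hr, rfl⟩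

end TripleProduct

end

/-- In a prime ring with nonzero core `H`, for an orthogonal pair `(R, L)` one has `LHR = H`. -/
theorem lhr_eq_core {Q : Type*} [NonUnitalRing Q]
    (hprime : IsPrimeRing Q) (hcore : ringCore Q ≠ ⊥)
    (R L : AddSubgroup Q) (h : IsOrthPair R L) :
    AddSubgroup.closure
        {x : Q | ∃ l ∈ L, ∃ y ∈ ringCore Q, ∃ r ∈ R, x = l * y * r} = ringCore Q := by
  obtain ⟨hR, hL, hR0, hL0, -⟩ := h
  exact le_antisymm (closure_triple_le isTwoSidedIdealSub_ringCore)
    (ringCore_le (isTwoSidedIdealSub_closure_triple hL hR)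
      (closure_triple_ne_bot hprime isTwoSidedIdealSub_ringCore hL0 hcore hR0))
end

section
/- Let Q be a simple unital associative ring. Let (R, L) be an orthogonal pair of Q and let B be a nonzero additive subgroup with RL ⊆ B ⊆ R ∩ L. Then BQ = R and QB = L, where BQ denotes the additive subgroup generated by all products b·x with b ∈ B, x ∈ Q, and QB the additive subgroup generated by all products x·b. -/
/-- Lemma 4.1, second part: in a simple unital ring `Q`, if `B` is a nonzero additive
subgroup with `RL ⊆ B ⊆ R ∩ L` for an orthogonal pair `(R, L)`, then `BQ = R` and `QB = L`. -/
theorem mul_univ_eq_of_simple {Q : Type*} [Ring Q]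
    (hsimple : (∃ a b : Q, a * b ≠ 0) ∧
      ∀ I : AddSubgroup Q, IsTwoSidedIdealSub I → I = ⊥ ∨ I = ⊤)
    (R L : AddSubgroup Q) (h : IsOrthPair R L)
    (B : AddSubgroup Q) (hBne : B ≠ ⊥)
    (hB1 : ∀ r ∈ R, ∀ l ∈ L, r * l ∈ B)
    (hB2 : (B : Set Q) ⊆ (R : Set Q) ∩ (L : Set Q)) :
    setMul (B : Set Q) (Set.univ : Set Q) = R ∧
      setMul (Set.univ : Set Q) (B : Set Q) = L := by
  obtain ⟨hR, hL, hRne, hLne, hLR⟩ := h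
  -- basic facts
  have hBR : ∀ b ∈ B, b ∈ R := fun b hb => (hB2 hb).1
  have hBL : ∀ b ∈ B, b ∈ L := fun b hb => (hB2 hb).2
  -- BQ is a right-multiplication-stable subgroup, and s * w ∈ BQ for s ∈ R, w ∈ BQ
  set BQ := setMul (B : Set Q) (Set.univ : Set Q) with hBQdef
  set QB := setMul (Set.univ : Set Q) (B : Set Q) with hQBdef
  have hBQR : ∀ w ∈ BQ, w ∈ R := by
    intro w hw
    refine AddSubgroup.closure_induction ?_ ?_ ?_ ?_ hw
    · rintro x ⟨b, hb, q, -, rfl⟩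
      exact hR b (hBR b hb) q
    · exact R.zero_mem
    · intro x y _ _ hx hy; exact R.add_mem hx hy
    · intro x _ hx; exact R.neg_mem hx
  have hQBL : ∀ w ∈ QB, w ∈ L := by
    intro w hw
    refine AddSubgroup.closure_induction ?_ ?_ ?_ ?_ hw
    · rintro x ⟨q, -, b, hb, rfl⟩
      exact hL b (hBL b hb) q
    · exact L.zero_mem
    · intro x y _ _ hx hy; exact L.add_mem hx hy
    · intro x _ hx; exact L.neg_mem hx
  -- R · BQ ⊆ BQ
  have hRBQ : ∀ w ∈ BQ, ∀ s ∈ R, s * w ∈ BQ := by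
    intro w hw
    refine AddSubgroup.closure_induction ?_ ?_ ?_ ?_ hw
    · rintro x ⟨b, hb, q, -, rfl⟩ s hs
      rw [← mul_assoc]
      exact AddSubgroup.subset_closure ⟨s * b, hB1 s hs b (hBL b hb), q, trivial, rfl⟩
    · intro s _; rw [mul_zero]; exact BQ.zero_mem
    · intro x y _ _ hx hy s hs; rw [mul_add]; exact BQ.add_mem (hx s hs) (hy s hs)
    · intro x _ hx s hs; rw [mul_neg]; exact BQ.neg_mem (hx s hs)
  -- BQ · L ⊆ B
  have hBQL : ∀ w ∈ BQ, ∀ l ∈ L, w * l ∈ B := by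
    intro w hw
    refine AddSubgroup.closure_induction ?_ ?_ ?_ ?_ hw
    · rintro x ⟨b, hb, q, -, rfl⟩ l hl
      rw [mul_assoc]
      exact hB1 b (hBR b hb) (q * l) (hL l hl q)
    · intro l _; rw [zero_mul]; exact B.zero_mem
    · intro x y _ _ hx hy l hl; rw [add_mul]; exact B.add_mem (hx l hl) (hy l hl)
    · intro x _ hx l hl; rw [neg_mul]; exact B.neg_mem (hx l hl)
  -- The two-sided ideal I = Q·(BQ)
  set I := setMul (Set.univ : Set Q) (BQ : Set Q) with hIdef
  have hI : IsTwoSidedIdealSub I := by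
    constructor
    · intro a ha x
      refine AddSubgroup.closure_induction (x := a) ?_ ?_ ?_ ?_ ha
      · rintro c ⟨z, -, w, hw, rfl⟩
        rw [← mul_assoc]
        exact AddSubgroup.subset_closure ⟨x * z, trivial, w, hw, rfl⟩
      · rw [mul_zero]; exact I.zero_mem
      · intro c d _ _ hc hd; rw [mul_add]; exact I.add_mem hc hd
      · intro c _ hc; rw [mul_neg]; exact I.neg_mem hc
    · intro a ha x
      refine AddSubgroup.closure_induction (x := a) ?_ ?_ ?_ ?_ ha
      · rintro c ⟨z, -, w, hw, rfl⟩
        rw [mul_assoc]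
        refine AddSubgroup.subset_closure ⟨z, trivial, w * x, ?_, rfl⟩
        -- w * x ∈ BQ since BQ is right-mult stable
        refine AddSubgroup.closure_induction (x := w) ?_ ?_ ?_ ?_ hw
        · rintro c ⟨b, hb, q, -, rfl⟩
          rw [mul_assoc]
          exact AddSubgroup.subset_closure ⟨b, hb, q * x, trivial, rfl⟩
        · rw [zero_mul]; exact BQ.zero_mem
        · intro c d _ _ hc hd; rw [add_mul]; exact BQ.add_mem hc hd
        · intro c _ hc; rw [neg_mul]; exact BQ.neg_mem hc
      · rw [zero_mul]; exact I.zero_mem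
      · intro c d _ _ hc hd; rw [add_mul]; exact I.add_mem hc hd
      · intro c _ hc; rw [neg_mul]; exact I.neg_mem hc
  -- I is nonzero, hence I = ⊤
  obtain ⟨b, hb, hbne⟩ : ∃ b ∈ B, b ≠ 0 := by
    by_contra hc
    push_neg at hc
    exact hBne (AddSubgroup.eq_bot_iff_forall B |>.mpr hc)
  have hbI : b ∈ I := by
    have h1 : b * 1 ∈ BQ := AddSubgroup.subset_closure ⟨b, hb, 1, trivial, rfl⟩
    rw [mul_one] at h1
    have : (1 : Q) * b ∈ I := AddSubgroup.subset_closure ⟨1, trivial, b, h1, rfl⟩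
    rwa [one_mul] at this
  have hItop : I = ⊤ := by
    rcases hsimple.2 I hI with hbot | htop
    · exact absurd (hbot ▸ hbI) (by simpa using hbne)
    · exact htop
  have h1I : (1 : Q) ∈ I := hItop ▸ AddSubgroup.mem_top 1
  -- r * a ∈ BQ for all a ∈ I, r ∈ R
  have key1 : ∀ a ∈ I, ∀ r ∈ R, r * a ∈ BQ := by
    intro a ha
    refine AddSubgroup.closure_induction ?_ ?_ ?_ ?_ ha
    · rintro c ⟨z, -, w, hw, rfl⟩ r hr
      rw [← mul_assoc]
      exact hRBQ w hw (r * z) (hR r hr z)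
    · intro r _; rw [mul_zero]; exact BQ.zero_mem
    · intro c d _ _ hc hd r hr; rw [mul_add]; exact BQ.add_mem (hc r hr) (hd r hr)
    · intro c _ hc r hr; rw [mul_neg]; exact BQ.neg_mem (hc r hr)
  -- a * l ∈ QB for all a ∈ I, l ∈ L
  have key2 : ∀ a ∈ I, ∀ l ∈ L, a * l ∈ QB := by
    intro a ha
    refine AddSubgroup.closure_induction ?_ ?_ ?_ ?_ ha
    · rintro c ⟨z, -, w, hw, rfl⟩ l hl
      rw [mul_assoc]
      exact AddSubgroup.subset_closure ⟨z, trivial, w * l, hBQL w hw l hl, rfl⟩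
    · intro l _; rw [zero_mul]; exact QB.zero_mem
    · intro c d _ _ hc hd l hl; rw [add_mul]; exact QB.add_mem (hc l hl) (hd l hl)
    · intro c _ hc l hl; rw [neg_mul]; exact QB.neg_mem (hc l hl)
  constructor
  · apply le_antisymm
    · intro w hw; exact hBQR w hw
    · intro r hr
      have := key1 1 h1I r hr
      rwa [mul_one] at this
  · apply le_antisymm
    · intro w hw; exact hQBL w hw
    · intro l hl
      have := key2 1 h1I l hl
      rwa [one_mul] at this
end

section
/- Let Q be a prime (not necessarily unital) associative ring whose core (the intersection of all nonzero two-sided ideals of Q) is nonzero. Let (R₁, L₁) and (R₂, L₂) be maximal orthogonal pairs of Q. If R₁ ∩ L₁ ⊆ R₂ ∩ L₂, then R₁ = R₂ and L₁ = L₂. -/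
lemma exists_ne_zero_of_ne_bot {Q : Type*} [NonUnitalRing Q] {H : AddSubgroup Q}
    (h : H ≠ ⊥) : ∃ x ∈ H, x ≠ 0 := by
  by_contra hc
  push_neg at hc
  exact h (AddSubgroup.eq_bot_iff_forall H |>.mpr hc)

lemma rightIdeal_sup {Q : Type*} [NonUnitalRing Q] {A B : AddSubgroup Q}
    (hA : IsRightIdeal A) (hB : IsRightIdeal B) : IsRightIdeal (A ⊔ B) := by
  intro r hr x
  rcases AddSubgroup.mem_sup.mp hr with ⟨a, ha, b, hb, rfl⟩
  rw [add_mul]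
  exact AddSubgroup.mem_sup.mpr ⟨a * x, hA a ha x, b * x, hB b hb x, rfl⟩

lemma leftIdeal_sup {Q : Type*} [NonUnitalRing Q] {A B : AddSubgroup Q}
    (hA : IsLeftIdeal A) (hB : IsLeftIdeal B) : IsLeftIdeal (A ⊔ B) := by
  intro l hl x
  rcases AddSubgroup.mem_sup.mp hl with ⟨a, ha, b, hb, rfl⟩
  rw [mul_add]
  exact AddSubgroup.mem_sup.mpr ⟨x * a, hA a ha x, x * b, hB b hb x, rfl⟩

/-- Lemma 4.2: in a prime ring with nonzero core, if `(R₁, L₁)` and `(R₂, L₂)` are maximal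
orthogonal pairs with `R₁ ∩ L₁ ⊆ R₂ ∩ L₂`, then `(R₁, L₁) = (R₂, L₂)`. -/
theorem maxOrthPair_eq_of_inter_subset {Q : Type*} [NonUnitalRing Q]
    (hprime : IsPrimeRing Q) (hcore : ringCore Q ≠ ⊥)
    (R₁ L₁ R₂ L₂ : AddSubgroup Q)
    (h₁ : IsMaxOrthPair R₁ L₁) (h₂ : IsMaxOrthPair R₂ L₂)
    (hsub : (R₁ : Set Q) ∩ (L₁ : Set Q) ⊆ (R₂ : Set Q) ∩ (L₂ : Set Q)) :
    R₁ = R₂ ∧ L₁ = L₂ := by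
  obtain ⟨⟨hR₁, hL₁, hR₁0, hL₁0, horth₁⟩, hmax₁⟩ := h₁
  obtain ⟨⟨hR₂, hL₂, hR₂0, hL₂0, horth₂⟩, hmax₂⟩ := h₂
  obtain ⟨l₀, hl₀L, hl₀⟩ := exists_ne_zero_of_ne_bot hL₁0
  obtain ⟨r₀, hr₀R, hr₀⟩ := exists_ne_zero_of_ne_bot hR₁0
  -- products R₁ * L₁ lie in R₂ ∩ L₂
  have hmem : ∀ r ∈ R₁, ∀ l ∈ L₁, r * l ∈ (R₂ : Set Q) ∩ (L₂ : Set Q) := by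
    intro r hr l hl
    exact hsub ⟨hR₁ r hr l, hL₁ l hl r⟩
  -- L₂ annihilates R₁ on the left
  have key1 : ∀ l ∈ L₂, ∀ r ∈ R₁, l * r = 0 := by
    intro l hl r hr
    have h2 : ∀ x : Q, (l * r) * x * l₀ = 0 := by
      intro x
      have hxl : r * (x * l₀) ∈ R₂ := (hmem r hr (x * l₀) (hL₁ l₀ hl₀L x)).1
      calc (l * r) * x * l₀ = l * (r * (x * l₀)) := by simp only [mul_assoc]
        _ = 0 := horth₂ l hl _ hxl
    rcases hprime _ _ h2 with h | h
    · exact h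
    · exact absurd h hl₀
  -- L₁ annihilates R₂ on the left
  have key2 : ∀ l ∈ L₁, ∀ r ∈ R₂, l * r = 0 := by
    intro l hl r hr
    have h2 : ∀ x : Q, r₀ * x * (l * r) = 0 := by
      intro x
      have hxl : (r₀ * x) * l ∈ L₂ := (hmem (r₀ * x) (hR₁ r₀ hr₀R x) l hl).2
      calc r₀ * x * (l * r) = ((r₀ * x) * l) * r := by simp only [mul_assoc]
        _ = 0 := horth₂ _ hxl r hr
    rcases hprime _ _ h2 with h | h
    · exact absurd h hr₀
    · exact h
  -- (R₁ ⊔ R₂, L₂) is an orthogonal pair containing (R₂, L₂)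
  have horthA : IsOrthPair (R₁ ⊔ R₂) L₂ := by
    refine ⟨rightIdeal_sup hR₁ hR₂, hL₂, ?_, hL₂0, ?_⟩
    · intro hbot
      exact hR₂0 (le_bot_iff.mp (hbot ▸ le_sup_right))
    · intro l hl r hr
      rcases AddSubgroup.mem_sup.mp hr with ⟨a, ha, b, hb, rfl⟩
      rw [mul_add, key1 l hl a ha, horth₂ l hl b hb, add_zero]
  have hR12 : R₁ ≤ R₂ := by
    have := (hmax₂ _ _ horthA le_sup_right le_rfl).1
    exact le_sup_left.trans this.ge
  -- (R₂, L₁ ⊔ L₂) is an orthogonal pair containing (R₂, L₂)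
  have horthB : IsOrthPair R₂ (L₁ ⊔ L₂) := by
    refine ⟨hR₂, leftIdeal_sup hL₁ hL₂, hR₂0, ?_, ?_⟩
    · intro hbot
      exact hL₂0 (le_bot_iff.mp (hbot ▸ le_sup_right))
    · intro l hl r hr
      rcases AddSubgroup.mem_sup.mp hl with ⟨a, ha, b, hb, rfl⟩
      rw [add_mul, key2 a ha r hr, horth₂ b hb r hr, add_zero]
  have hL12 : L₁ ≤ L₂ := by
    have := (hmax₂ _ _ horthB le_rfl le_sup_right).2
    exact le_sup_left.trans this.ge
  exact hmax₁ R₂ L₂ ⟨hR₂, hL₂, hR₂0, hL₂0, horth₂⟩ hR12 hL12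
end

section
/- Let Q be a (not necessarily unital) associative ring and let S be a maximal zero product subset of Q. Then S is an additive subgroup of Q and SQS ⊆ S (i.e., s·x·s' ∈ S for all s, s' ∈ S and x ∈ Q); in particular S is a regular inner ideal of Q. -/
/-- A nonempty subset `S` of `Q` has zero product if `S² = 0`. -/
def HasZeroProduct {Q : Type*} [NonUnitalRing Q] (S : Set Q) : Prop :=
  S.Nonempty ∧ ∀ s ∈ S, ∀ t ∈ S, s * t = 0

/-- A maximal zero product subset: maximal under inclusion among zero product subsets. -/
def IsMaxZeroProduct {Q : Type*} [NonUnitalRing Q] (S : Set Q) : Prop :=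
  HasZeroProduct S ∧ ∀ T : Set Q, HasZeroProduct T → S ⊆ T → S = T

lemma mem_of_maxZeroProduct {Q : Type*} [NonUnitalRing Q] {S : Set Q}
    (hS : IsMaxZeroProduct S) (a : Q)
    (h1 : ∀ s ∈ S, a * s = 0) (h2 : ∀ s ∈ S, s * a = 0) (ha : a * a = 0) :
    a ∈ S := by
  obtain ⟨⟨hne, hmul⟩, hmax⟩ := hS
  have hT : HasZeroProduct (insert a S) := by
    refine ⟨⟨a, Set.mem_insert _ _⟩, ?_⟩
    rintro s (rfl | hs) t (rfl | ht)
    · exact ha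
    · exact h1 t ht
    · exact h2 s hs
    · exact hmul s hs t ht
  have := hmax _ hT (Set.subset_insert _ _)
  rw [this]
  exact Set.mem_insert _ _

/-- A maximal zero product subset `S` of `Q` is an additive subgroup with `SQS ⊆ S`; in
particular it is a regular inner ideal of `Q`. -/
theorem maxZeroProduct_is_regInner {Q : Type*} [NonUnitalRing Q]
    (S : Set Q) (hS : IsMaxZeroProduct S) :
    (∃ B : AddSubgroup Q, (B : Set Q) = S) ∧
      ∀ s ∈ S, ∀ x : Q, ∀ t ∈ S, s * x * t ∈ S := by
  have hmul := hS.1.2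
  constructor
  · refine ⟨⟨⟨⟨S, ?_⟩, ?_⟩, ?_⟩, rfl⟩
    · -- add_mem
      intro a b ha hb
      exact mem_of_maxZeroProduct hS (a + b)
        (fun s hs => by rw [add_mul, hmul a ha s hs, hmul b hb s hs, add_zero])
        (fun s hs => by rw [mul_add, hmul s hs a ha, hmul s hs b hb, add_zero])
        (by rw [add_mul, mul_add, mul_add, hmul a ha a ha, hmul a ha b hb,
            hmul b hb a ha, hmul b hb b hb]; simp)
    · -- zero_mem
      exact mem_of_maxZeroProduct hS 0 (fun s _ => zero_mul s) (fun s _ => mul_zero s)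
        (mul_zero 0)
    · -- neg_mem
      intro a ha
      exact mem_of_maxZeroProduct hS (-a)
        (fun s hs => by rw [neg_mul, hmul a ha s hs, neg_zero])
        (fun s hs => by rw [mul_neg, hmul s hs a ha, neg_zero])
        (by rw [neg_mul_neg, hmul a ha a ha])
  · intro s hs x t ht
    exact mem_of_maxZeroProduct hS (s * x * t)
      (fun u hu => by rw [mul_assoc (s * x) t u, hmul t ht u hu, mul_zero])
      (fun u hu => by rw [← mul_assoc u, ← mul_assoc u, hmul u hu s hs, zero_mul, zero_mul])
      (by rw [mul_assoc (s * x) t (s * x * t), ← mul_assoc t (s * x) t, ← mul_assoc t s x,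
          hmul t ht s hs, zero_mul, zero_mul, mul_zero])
end

section
/- Let Q be a prime (not necessarily unital) associative ring with nonzero core (the intersection of all nonzero two-sided ideals of Q is nonzero) containing a nonzero nilpotent element, and let S be a subset of Q. Then the following are equivalent: (i) S is a maximal zero product subset of Q; (ii) S is (the underlying set of) a maximal regular inner ideal of Q; (iii) S = R ∩ L for some pair (R, L) of a right ideal R and a left ideal L of Q with R = rann(L) and L = lann(R), where R and L are nonzero and LR = 0. -/
/-- The left annihilator of a subset `S`. -/
def lann {Q : Type*} [NonUnitalRing Q] (S : Set Q) : Set Q := {a : Q | ∀ s ∈ S, a * s = 0}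

/-- The right annihilator of a subset `S`. -/
def rann {Q : Type*} [NonUnitalRing Q] (S : Set Q) : Set Q := {a : Q | ∀ s ∈ S, s * a = 0}

/-- `npow1 x n = x ^ (n + 1)`: positive powers in a not necessarily unital ring. -/
def npow1 {Q : Type*} [NonUnitalRing Q] (x : Q) : ℕ → Q
  | 0 => x
  | n + 1 => npow1 x n * x

/-- A regular inner ideal: an additive subgroup `B` with `BQB ⊆ B` and `B² = 0`. -/
def IsRegInner {Q : Type*} [NonUnitalRing Q] (B : AddSubgroup Q) : Prop :=
  (∀ b ∈ B, ∀ x : Q, ∀ b' ∈ B, b * x * b' ∈ B) ∧ (∀ b ∈ B, ∀ b' ∈ B, b * b' = 0)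

/-- A maximal regular inner ideal: maximal under inclusion among regular inner ideals. -/
def IsMaxRegInner {Q : Type*} [NonUnitalRing Q] (B : AddSubgroup Q) : Prop :=
  IsRegInner B ∧ ∀ B' : AddSubgroup Q, IsRegInner B' → B ≤ B' → B = B'

section Helpers

variable {Q : Type*} [NonUnitalRing Q]

private lemma npow1_add (x : Q) (m n : ℕ) :
    npow1 x m * npow1 x n = npow1 x (m + n + 1) := by
  induction n with
  | zero => rfl
  | succ n ih =>
      show npow1 x m * (npow1 x n * x) = npow1 x (m + n + 1) * x
      rw [← mul_assoc, ih]

private lemma npow1_zero_of_le (x : Q) {n k : ℕ} (h : npow1 x n = 0) (hk : n ≤ k) :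
    npow1 x k = 0 := by
  obtain ⟨j, rfl⟩ := Nat.exists_eq_add_of_le hk
  induction j with
  | zero => simpa using h
  | succ j ih =>
      show npow1 x (n + j) * x = 0
      rw [ih (Nat.le_add_right n j), zero_mul]

private lemma exists_sq_zero (hnilp : ∃ x : Q, x ≠ 0 ∧ ∃ n : ℕ, npow1 x n = 0) :
    ∃ y : Q, y ≠ 0 ∧ y * y = 0 := by
  classical
  obtain ⟨x, hx, hn⟩ := hnilp
  rcases Nat.eq_zero_or_pos (Nat.find hn) with h0 | hpos
  · have hsp := Nat.find_spec hn
    rw [h0] at hsp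
    exact absurd hsp hx
  · obtain ⟨m, hm⟩ : ∃ m, Nat.find hn = m + 1 := ⟨Nat.find hn - 1, by omega⟩
    refine ⟨npow1 x m, Nat.find_min hn (by omega), ?_⟩
    rw [npow1_add]
    exact npow1_zero_of_le x (Nat.find_spec hn) (by omega)

/-- right annihilator as an additive subgroup -/
private def rannSub (S : Set Q) : AddSubgroup Q where
  carrier := rann S
  zero_mem' := fun s _ => mul_zero s
  add_mem' := fun {a b} ha hb s hs => by rw [mul_add, ha s hs, hb s hs, add_zero]
  neg_mem' := fun {a} ha s hs => by rw [mul_neg, ha s hs, neg_zero]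

/-- left annihilator as an additive subgroup -/
private def lannSub (S : Set Q) : AddSubgroup Q where
  carrier := lann S
  zero_mem' := fun s _ => zero_mul s
  add_mem' := fun {a b} ha hb s hs => by rw [add_mul, ha s hs, hb s hs, add_zero]
  neg_mem' := fun {a} ha s hs => by rw [neg_mul, ha s hs, neg_zero]

private def GoodPair (R L : AddSubgroup Q) : Prop :=
  IsRightIdeal R ∧ IsLeftIdeal L ∧ R ≠ ⊥ ∧ L ≠ ⊥ ∧
    (∀ l ∈ L, ∀ r ∈ R, l * r = 0) ∧
    (R : Set Q) = rann (L : Set Q) ∧ (L : Set Q) = lann (R : Set Q)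

private lemma exists_ne_zero_mem (hprime : IsPrimeRing Q) {R L : AddSubgroup Q}
    (gp : GoodPair R L) : ∃ c : Q, c ∈ R ∧ c ∈ L ∧ c ≠ 0 := by
  obtain ⟨hR, hL, hRne, hLne, hLR, hRr, hLl⟩ := gp
  obtain ⟨r, hr, hr0⟩ : ∃ r ∈ R, r ≠ 0 := by
    by_contra h
    push_neg at h
    exact hRne ((AddSubgroup.eq_bot_iff_forall R).2 h)
  obtain ⟨l, hl, hl0⟩ : ∃ l ∈ L, l ≠ 0 := by
    by_contra h
    push_neg at h
    exact hLne ((AddSubgroup.eq_bot_iff_forall L).2 h)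
  obtain ⟨x, hx⟩ : ∃ x : Q, r * x * l ≠ 0 := by
    by_contra h
    push_neg at h
    rcases hprime r l h with h' | h'
    · exact hr0 h'
    · exact hl0 h'
  refine ⟨r * x * l, ?_, ?_, hx⟩
  · rw [mul_assoc]; exact hR r hr (x * l)
  · exact hL l hl (r * x)

private lemma mem_R_of_absorb (hprime : IsPrimeRing Q) {R L : AddSubgroup Q}
    (gp : GoodPair R L) {t : Q} (ht : ∀ s : Q, s ∈ R → s ∈ L → s * t = 0) : t ∈ R := by
  obtain ⟨c, hcR, hcL, hc0⟩ := exists_ne_zero_mem hprime gp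
  have key : ∀ l ∈ L, l * t = 0 := by
    intro l hl
    rcases hprime c (l * t) (fun x => by
      rw [← mul_assoc]
      refine ht (c * x * l) ?_ ?_
      · rw [mul_assoc]; exact gp.1 c hcR (x * l)
      · exact gp.2.1 l hl (c * x)) with h | h
    · exact absurd h hc0
    · exact h
  show t ∈ (R : Set Q)
  rw [gp.2.2.2.2.2.1]
  exact key

private lemma mem_L_of_absorb (hprime : IsPrimeRing Q) {R L : AddSubgroup Q}
    (gp : GoodPair R L) {t : Q} (ht : ∀ s : Q, s ∈ R → s ∈ L → t * s = 0) : t ∈ L := by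
  obtain ⟨c, hcR, hcL, hc0⟩ := exists_ne_zero_mem hprime gp
  have key : ∀ r ∈ R, t * r = 0 := by
    intro r hr
    rcases hprime (t * r) c (fun x => by
      rw [mul_assoc t r x, mul_assoc t (r * x) c]
      refine ht (r * x * c) ?_ ?_
      · rw [mul_assoc]; exact gp.1 r hr (x * c)
      · exact gp.2.1 c hcL (r * x)) with h | h
    · exact h
    · exact absurd h hc0
  show t ∈ (L : Set Q)
  rw [gp.2.2.2.2.2.2]
  exact key

private lemma goodPair_maxZero (hprime : IsPrimeRing Q) {R L : AddSubgroup Q}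
    (gp : GoodPair R L) : IsMaxZeroProduct ((R : Set Q) ∩ (L : Set Q)) := by
  refine ⟨⟨⟨0, R.zero_mem, L.zero_mem⟩, fun s hs t ht => gp.2.2.2.2.1 s hs.2 t ht.1⟩, ?_⟩
  intro T hT hsub
  refine Set.Subset.antisymm hsub ?_
  intro t htT
  constructor
  · exact mem_R_of_absorb hprime gp fun s hsR hsL => hT.2 s (hsub ⟨hsR, hsL⟩) t htT
  · exact mem_L_of_absorb hprime gp fun s hsR hsL => hT.2 t htT s (hsub ⟨hsR, hsL⟩)

private lemma goodPair_maxRegInner (hprime : IsPrimeRing Q) {R L : AddSubgroup Q}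
    (gp : GoodPair R L) : IsMaxRegInner (R ⊓ L) := by
  have hreg : IsRegInner (R ⊓ L) := by
    constructor
    · intro b hb x b' hb'
      rw [AddSubgroup.mem_inf] at hb hb' ⊢
      constructor
      · rw [mul_assoc]; exact gp.1 b hb.1 (x * b')
      · exact gp.2.1 b' hb'.2 (b * x)
    · intro b hb b' hb'
      rw [AddSubgroup.mem_inf] at hb hb'
      exact gp.2.2.2.2.1 b hb.2 b' hb'.1
  refine ⟨hreg, ?_⟩
  intro B' hB' hle
  refine le_antisymm hle ?_
  intro b hb
  rw [AddSubgroup.mem_inf]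
  constructor
  · exact mem_R_of_absorb hprime gp fun s hsR hsL =>
      hB'.2 s (hle (AddSubgroup.mem_inf.2 ⟨hsR, hsL⟩)) b hb
  · exact mem_L_of_absorb hprime gp fun s hsR hsL =>
      hB'.2 b hb s (hle (AddSubgroup.mem_inf.2 ⟨hsR, hsL⟩))

private lemma construct (S : Set Q) (hS : ∀ s ∈ S, ∀ t ∈ S, s * t = 0)
    (hs : ∃ s ∈ S, s ≠ 0) :
    ∃ R L : AddSubgroup Q, GoodPair R L ∧ S ⊆ (R : Set Q) ∩ (L : Set Q) := by
  obtain ⟨s₀, hs₀S, hs₀0⟩ := hs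
  set R : AddSubgroup Q := rannSub (lann S) with hRdef
  set L : AddSubgroup Q := lannSub (R : Set Q) with hLdef
  have hmemR : ∀ a : Q, a ∈ R ↔ ∀ l ∈ lann S, l * a = 0 := fun a => Iff.rfl
  have hmemL : ∀ a : Q, a ∈ L ↔ ∀ r ∈ (R : Set Q), a * r = 0 := fun a => Iff.rfl
  have hSsubR : ∀ s ∈ S, s ∈ R := fun s hsS => (hmemR s).2 fun l hl => hl s hsS
  have hSlann : ∀ s ∈ S, s ∈ lann S := fun s hsS t ht => hS s hsS t ht
  have hSsubL : ∀ s ∈ S, s ∈ L := fun s hsS =>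
    (hmemL s).2 fun r hr => hr s (hSlann s hsS)
  refine ⟨R, L, ⟨?_, ?_, ?_, ?_, ?_, ?_, rfl⟩, fun s hsS => ⟨hSsubR s hsS, hSsubL s hsS⟩⟩
  · -- right ideal
    intro r hr x
    refine (hmemR _).2 fun l hl => ?_
    rw [← mul_assoc, (hmemR r).1 hr l hl, zero_mul]
  · -- left ideal
    intro l hl x
    refine (hmemL _).2 fun r hr => ?_
    rw [mul_assoc, (hmemL l).1 hl r hr, mul_zero]
  · -- R ≠ ⊥
    intro hbot
    exact hs₀0 ((AddSubgroup.eq_bot_iff_forall R).1 hbot s₀ (hSsubR s₀ hs₀S))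
  · -- L ≠ ⊥
    intro hbot
    exact hs₀0 ((AddSubgroup.eq_bot_iff_forall L).1 hbot s₀ (hSsubL s₀ hs₀S))
  · -- L R = 0
    intro l hl r hr
    exact (hmemL l).1 hl r hr
  · -- R = rann L
    apply Set.Subset.antisymm
    · intro t htR l hl
      exact (hmemL l).1 hl t htR
    · intro t ht
      refine (hmemR t).2 fun l hl => ?_
      have hlL : l ∈ L := (hmemL l).2 fun r hr => hr l hl
      exact ht l hlL

private def yInner (y : Q) : AddSubgroup Q where
  carrier := {a | ∃ (n : ℤ) (q : Q), a = n • y + y * q * y}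
  zero_mem' := ⟨0, 0, by simp⟩
  add_mem' := by
    rintro a b ⟨n, q, rfl⟩ ⟨m, r, rfl⟩
    refine ⟨n + m, q + r, ?_⟩
    simp only [add_smul, mul_add, add_mul]
    abel
  neg_mem' := by
    rintro a ⟨n, q, rfl⟩
    refine ⟨-n, -q, ?_⟩
    simp only [neg_smul, mul_neg, neg_mul, neg_add]

private lemma yInner_reg {y : Q} (hy : y * y = 0) : IsRegInner (yInner y) := by
  have h2 : ∀ t : Q, y * (y * t) = 0 := fun t => by rw [← mul_assoc, hy, zero_mul]
  constructor
  · rintro a ⟨n, q, rfl⟩ x b ⟨m, r, rfl⟩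
    refine ⟨0, (m * n) • x + n • (x * (y * r)) + m • (q * (y * x)) + q * (y * (x * (y * r))), ?_⟩
    simp only [zero_smul, zero_add, mul_add, add_mul, mul_smul_comm, smul_mul_assoc,
      mul_assoc, smul_smul, smul_add]
    abel
  · rintro a ⟨n, q, rfl⟩ b ⟨m, r, rfl⟩
    simp only [mul_add, add_mul, mul_smul_comm, smul_mul_assoc, mul_assoc, hy, h2,
      mul_zero, smul_zero, zero_add, add_zero, smul_smul]

private lemma maxRegInner_ne_bot {B : AddSubgroup Q} (hB : IsMaxRegInner B)
    (hy : ∃ y : Q, y ≠ 0 ∧ y * y = 0) : B ≠ ⊥ := by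
  intro hbot
  obtain ⟨y, hy0, hy2⟩ := hy
  have heq : B = yInner y := hB.2 (yInner y) (yInner_reg hy2) (hbot ▸ bot_le)
  have hyB : y ∈ B := heq ▸ ⟨1, 0, by simp⟩
  rw [hbot, AddSubgroup.mem_bot] at hyB
  exact hy0 hyB

end Helpers

/-- Theorem 4.3: in a prime ring with nonzero core containing a nonzero nilpotent element,
a subset `S` is a maximal zero product subset iff it is a maximal regular inner ideal iff
`S = R ∩ L` for a maximal orthogonal pair `(R, L)` (i.e. `R = rann(L)`, `L = lann(R)`). -/
theorem maxZeroProduct_equiv {Q : Type*} [NonUnitalRing Q]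
    (hprime : IsPrimeRing Q) (hcore : ringCore Q ≠ ⊥)
    (hnilp : ∃ x : Q, x ≠ 0 ∧ ∃ n : ℕ, npow1 x n = 0) (S : Set Q) :
    (IsMaxZeroProduct S ↔ ∃ B : AddSubgroup Q, IsMaxRegInner B ∧ (B : Set Q) = S) ∧
    ((∃ B : AddSubgroup Q, IsMaxRegInner B ∧ (B : Set Q) = S) ↔
      ∃ R L : AddSubgroup Q, IsRightIdeal R ∧ IsLeftIdeal L ∧ R ≠ ⊥ ∧ L ≠ ⊥ ∧
        (∀ l ∈ L, ∀ r ∈ R, l * r = 0) ∧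
        (R : Set Q) = rann (L : Set Q) ∧ (L : Set Q) = lann (R : Set Q) ∧
        S = (R : Set Q) ∩ (L : Set Q)) := by
  classical
  have hsq : ∃ y : Q, y ≠ 0 ∧ y * y = 0 := exists_sq_zero hnilp
  constructor
  · constructor
    · -- (i) → (ii)
      intro hS
      obtain ⟨y, hy0, hy2⟩ := hsq
      have hs : ∃ s ∈ S, s ≠ 0 := by
        by_contra h
        push_neg at h
        have hT : HasZeroProduct ({0, y} : Set Q) := by
          refine ⟨⟨0, Or.inl rfl⟩, ?_⟩
          rintro s (rfl | rfl) t (rfl | rfl) <;> simp [hy2]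
        have hsub : S ⊆ ({0, y} : Set Q) := fun s hsS => Or.inl (h s hsS)
        have heq := hS.2 _ hT hsub
        have hyS : y ∈ S := by rw [heq]; exact Or.inr rfl
        exact hy0 (h y hyS)
      obtain ⟨R, L, gp, hsub⟩ := construct S hS.1.2 hs
      have heq : S = (R : Set Q) ∩ (L : Set Q) :=
        hS.2 _ (goodPair_maxZero hprime gp).1 hsub
      exact ⟨R ⊓ L, goodPair_maxRegInner hprime gp,
        by rw [AddSubgroup.coe_inf, heq]⟩
    · -- (ii) → (i)
      rintro ⟨B, hB, rfl⟩
      have hne := maxRegInner_ne_bot hB hsq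
      obtain ⟨s, hsB, hs0⟩ : ∃ s ∈ B, s ≠ 0 := by
        by_contra h
        push_neg at h
        exact hne ((AddSubgroup.eq_bot_iff_forall B).2 h)
      obtain ⟨R, L, gp, hsub⟩ := construct (B : Set Q) hB.1.2 ⟨s, hsB, hs0⟩
      have hle : B ≤ R ⊓ L := fun b hb =>
        AddSubgroup.mem_inf.2 ⟨(hsub hb).1, (hsub hb).2⟩
      have heq : B = R ⊓ L := hB.2 _ (goodPair_maxRegInner hprime gp).1 hle
      rw [heq, AddSubgroup.coe_inf]
      exact goodPair_maxZero hprime gp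
  · constructor
    · -- (ii) → (iii)
      rintro ⟨B, hB, rfl⟩
      have hne := maxRegInner_ne_bot hB hsq
      obtain ⟨s, hsB, hs0⟩ : ∃ s ∈ B, s ≠ 0 := by
        by_contra h
        push_neg at h
        exact hne ((AddSubgroup.eq_bot_iff_forall B).2 h)
      obtain ⟨R, L, gp, hsub⟩ := construct (B : Set Q) hB.1.2 ⟨s, hsB, hs0⟩
      have hle : B ≤ R ⊓ L := fun b hb =>
        AddSubgroup.mem_inf.2 ⟨(hsub hb).1, (hsub hb).2⟩
      have heq : B = R ⊓ L := hB.2 _ (goodPair_maxRegInner hprime gp).1 hle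
      exact ⟨R, L, gp.1, gp.2.1, gp.2.2.1, gp.2.2.2.1, gp.2.2.2.2.1,
        gp.2.2.2.2.2.1, gp.2.2.2.2.2.2, by rw [heq, AddSubgroup.coe_inf]⟩
    · -- (iii) → (ii)
      rintro ⟨R, L, hR, hL, hRne, hLne, hLR, hRr, hLl, rfl⟩
      have gp : GoodPair R L := ⟨hR, hL, hRne, hLne, hLR, hRr, hLl⟩
      exact ⟨R ⊓ L, goodPair_maxRegInner hprime gp, AddSubgroup.coe_inf R L⟩
end

section
/- Let Q be a non-unital simple associative ring of characteristic not 2 or 3 (i.e., for every nonzero x ∈ Q, 2x ≠ 0 and 3x ≠ 0). For an additive subgroup B of Q the following are equivalent: (i) B is a maximal zero product subset of Q; (ii) B is a maximal regular inner ideal of Q; (iii) B is a maximal abelian inner ideal of the Lie ring Q⁽⁻⁾. -/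
/-- An abelian inner ideal of the Lie ring `Q⁽⁻⁾`: an additive subgroup `B` with
`[B, B] = 0` and `[[B, Q], B] ⊆ B`, where `[x, y] = x * y - y * x`. -/
def IsAbelianLieInner {Q : Type*} [NonUnitalRing Q] (B : AddSubgroup Q) : Prop :=
  (∀ b ∈ B, ∀ b' ∈ B, b * b' - b' * b = 0) ∧
    ∀ b ∈ B, ∀ x : Q, ∀ b' ∈ B, (b * x - x * b) * b' - b' * (b * x - x * b) ∈ B

/-- A maximal abelian inner ideal: maximal under inclusion among abelian inner ideals. -/
def IsMaxAbelianLieInner {Q : Type*} [NonUnitalRing Q] (B : AddSubgroup Q) : Prop :=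
  IsAbelianLieInner B ∧ ∀ B' : AddSubgroup Q, IsAbelianLieInner B' → B ≤ B' → B = B'

/-!
A zero product set `S` lies in the regular inner ideal spanned by `S ∪ SQS`, and regular inner
ideals are abelian; so the three maximality conditions coincide as soon as every abelian inner
ideal `B` of `Q⁽⁻⁾` satisfies `B² = 0`.

For `b ∈ B` we have `ad_b³ = 0`, because `[[b, x], b] ∈ B` commutes with `b`. In a simple ring
without 2- and 3-torsion, `ad_a³ = 0` gives the identity `[a, x] w [a², y] = [a², x] w [a, y]`,
which makes `[a, y] v ↦ [a², y] v` a well-defined element `γ` of the centroid. Its square is left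
multiplication by `4 γ(a) - 4 a²`; since a nonzero centroid element of a simple ring is bijective,
this would produce an identity element unless `γ = 0`. Hence `a²` is central, and central elements
vanish in a non-unital simple ring, so `b² = 0`. Polarising, with `bc = cb`, gives `bc = 0`.
-/

open Function

namespace InnerIdeal

def IsSimpleNonUnitalRing (Q : Type*) [NonUnitalRing Q] : Prop :=
  (∃ a b : Q, a * b ≠ 0) ∧ ∀ I : AddSubgroup Q, IsTwoSidedIdealSub I → I = ⊥ ∨ I = ⊤

variable {Q : Type*} [NonUnitalRing Q]

theorem map_mem_closure {G : Type*} [AddGroup G] {S : Set G} (f : G →+ G)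
    (hS : ∀ s ∈ S, f s ∈ AddSubgroup.closure S) {x : G} (hx : x ∈ AddSubgroup.closure S) :
    f x ∈ AddSubgroup.closure S :=
  (AddSubgroup.closure_le (K := (AddSubgroup.closure S).comap f)).2 hS hx

theorem isTwoSidedIdealSub_closure {S : Set Q}
    (hS : ∀ s ∈ S, ∀ q : Q, q * s ∈ AddSubgroup.closure S ∧ s * q ∈ AddSubgroup.closure S) :
    IsTwoSidedIdealSub (AddSubgroup.closure S) :=
  ⟨fun _ ha q => map_mem_closure (AddMonoidHom.mulLeft q) (fun s hs => (hS s hs q).1) ha,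
    fun _ ha q => map_mem_closure (AddMonoidHom.mulRight q) (fun s hs => (hS s hs q).2) ha⟩

theorem exists_centroidHom_of_graph (G : AddSubgroup (Q × Q))
    (hmul_left : ∀ q : Q, ∀ p ∈ G, (q, q) * p ∈ G) (hmul_right : ∀ q : Q, ∀ p ∈ G, p * (q, q) ∈ G)
    (hdom : ∀ z, ∃ g, (z, g) ∈ G) (hfun : ∀ g, ((0 : Q), g) ∈ G → g = 0) :
    ∃ γ : CentroidHom Q, ∀ p ∈ G, γ p.1 = p.2 := by
  choose γ hγ using hdom
  have huniq : ∀ p ∈ G, γ p.1 = p.2 := fun p hp => by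
    have hsub : (p.1, γ p.1) - p = ((0 : Q), γ p.1 - p.2) := Prod.ext (sub_self _) rfl
    exact sub_eq_zero.mp (hfun _ (hsub ▸ sub_mem (hγ p.1) hp))
  refine ⟨{ toFun := γ
            map_zero' := huniq 0 (zero_mem G)
            map_add' := fun x y => huniq _ (add_mem (hγ x) (hγ y))
            map_mul_left' := fun q z => huniq _ (hmul_left q _ (hγ z))
            map_mul_right' := fun z q => huniq _ (hmul_right q _ (hγ z)) }, huniq⟩

def ad (a x : Q) : Q := a * x - x * a

theorem mul_ad (a q y : Q) : q * ad a y = ad a (q * y) - ad a q * y := by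
  simp only [ad]; noncomm_ring

theorem ad_mul_self (a y : Q) : ad (a * a) y = ad a (a * y + y * a) := by
  simp only [ad]; noncomm_ring

theorem self_mul_ad_mul (a y v : Q) : a * (ad a y * v) = ad a (a * y) * v := by
  simp only [ad]; noncomm_ring

section AdCubeZero

variable {a : Q} (ha : ∀ x, ad a (ad a (ad a x)) = 0)
include ha

theorem ad_ad_mul_ad_add_ad_mul_ad_ad (h3 : ∀ z : Q, 3 • z = 0 → z = 0) (u v : Q) :
    ad a (ad a u) * ad a v + ad a u * ad a (ad a v) = 0 := by
  refine h3 _ ?_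
  have e : 3 • (ad a (ad a u) * ad a v + ad a u * ad a (ad a v)) =
      ad a (ad a (ad a (u * v))) - ad a (ad a (ad a u)) * v - u * ad a (ad a (ad a v)) := by
    simp only [ad]; noncomm_ring
  rw [e, ha, ha, ha]
  simp

theorem ad_mul_mul_ad_mul_self (h2 : ∀ z : Q, 2 • z = 0 → z = 0)
    (h3 : ∀ z : Q, 3 • z = 0 → z = 0) (x w y : Q) :
    ad a x * w * ad (a * a) y = ad (a * a) x * w * ad a y := by
  have L := ad_ad_mul_ad_add_ad_mul_ad_ad ha h3
  refine sub_eq_zero.mp (h2 _ ?_)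
  have e : 2 • (ad a x * w * ad (a * a) y - ad (a * a) x * w * ad a y) =
      ad a (ad a x) * ad a w * y + ad a x * ad a (ad a w) * y
        + x * (ad a (ad a w) * ad a y + ad a w * ad a (ad a y))
        - (ad a (ad a x) * ad a (w * y) + ad a x * ad a (ad a (w * y)))
        - (ad a (ad a (x * w)) * ad a y + ad a (x * w) * ad a (ad a y)) := by
    simp only [ad]; noncomm_ring
  rw [e, L x (w * y), L (x * w) y, L w y, ← add_mul, L x w]
  simp

theorem ad_mul_self_ad_add_mul (y : Q) :
    ad (a * a) (a * y + y * a) = 4 • ad (a * a) (a * y) - 4 • (a * a * ad a y) := by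
  rw [← sub_eq_zero, ← ha y]
  simp only [ad]; noncomm_ring

end AdCubeZero

def adGraph (a b : Q) : AddSubgroup (Q × Q) :=
  AddSubgroup.closure {p | ∃ y v, (ad a y * v, ad b y * v) = p}

theorem mk_mem_adGraph (a b y v : Q) : (ad a y * v, ad b y * v) ∈ adGraph a b :=
  AddSubgroup.subset_closure ⟨y, v, rfl⟩

theorem diag_mul_mem_adGraph {a b : Q} (q : Q) {p : Q × Q} (hp : p ∈ adGraph a b) :
    (q, q) * p ∈ adGraph a b := by
  refine map_mem_closure (AddMonoidHom.mulLeft (q, q)) ?_ hp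
  rintro _ ⟨y, v, rfl⟩
  have : (q, q) * (ad a y * v, ad b y * v) =
      (ad a (q * y) * v, ad b (q * y) * v) - (ad a q * (y * v), ad b q * (y * v)) := by
    simp only [Prod.mk_mul_mk, Prod.mk_sub_mk, ← mul_assoc, mul_ad, sub_mul]
  rw [AddMonoidHom.coe_mulLeft, this]
  exact sub_mem (mk_mem_adGraph _ _ _ _) (mk_mem_adGraph _ _ _ _)

theorem mul_diag_mem_adGraph {a b : Q} (q : Q) {p : Q × Q} (hp : p ∈ adGraph a b) :
    p * (q, q) ∈ adGraph a b := by
  refine map_mem_closure (AddMonoidHom.mulRight (q, q)) ?_ hp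
  rintro _ ⟨y, v, rfl⟩
  rw [AddMonoidHom.mulRight_apply, Prod.mk_mul_mk, mul_assoc, mul_assoc]
  exact mk_mem_adGraph a b y (v * q)

theorem fst_mul_snd_eq_of_mem_adGraph {a b : Q}
    (hab : ∀ x w y, ad a x * w * ad b y = ad b x * w * ad a y) {p p' : Q × Q}
    (hp : p ∈ adGraph a b) (hp' : p' ∈ adGraph a b) : p'.1 * p.2 = p'.2 * p.1 := by
  induction hp, hp' using AddSubgroup.closure_induction₂ with
  | mem p p' hp hp' =>
    obtain ⟨y, v, rfl⟩ := hp
    obtain ⟨y', v', rfl⟩ := hp'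
    simp only [← mul_assoc, hab]
  | zero_left | zero_right => simp
  | add_left | add_right | neg_left | neg_right => simp_all [add_mul, mul_add]

namespace IsSimpleNonUnitalRing

variable (hQ : IsSimpleNonUnitalRing Q)
include hQ

theorem eq_top_of_mem {I : AddSubgroup Q} (hI : IsTwoSidedIdealSub I) {z : Q} (hz : z ∈ I)
    (hz0 : z ≠ 0) : I = ⊤ :=
  (hQ.2 I hI).resolve_left fun h => hz0 (by rwa [h, AddSubgroup.mem_bot] at hz)

theorem eq_zero_of_forall_mul_right_eq_zero {x : Q} (h : ∀ q, x * q = 0) : x = 0 := by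
  let ann : AddSubgroup Q := ⨅ q : Q, (AddMonoidHom.mulRight q).ker
  have hmem : ∀ w, w ∈ ann ↔ ∀ q, w * q = 0 := by simp [ann]
  have hann : IsTwoSidedIdealSub ann := by
    simp only [IsTwoSidedIdealSub, hmem]
    exact ⟨fun w hw r q => by rw [mul_assoc, hw, mul_zero],
      fun w hw r q => by rw [mul_assoc, hw]⟩
  by_contra hx
  obtain ⟨a, b, hab⟩ := hQ.1
  have := hQ.eq_top_of_mem hann ((hmem x).2 h) hx
  exact hab ((hmem a).1 (this ▸ AddSubgroup.mem_top a) b)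

theorem eq_zero_of_forall_mul_left_eq_zero {x : Q} (h : ∀ q, q * x = 0) : x = 0 := by
  let ann : AddSubgroup Q := ⨅ q : Q, (AddMonoidHom.mulLeft q).ker
  have hmem : ∀ w, w ∈ ann ↔ ∀ q, q * w = 0 := by simp [ann]
  have hann : IsTwoSidedIdealSub ann := by
    simp only [IsTwoSidedIdealSub, hmem]
    exact ⟨fun w hw r q => by rw [← mul_assoc, hw],
      fun w hw r q => by rw [← mul_assoc, hw, zero_mul]⟩
  by_contra hx
  obtain ⟨a, b, hab⟩ := hQ.1
  have := hQ.eq_top_of_mem hann ((hmem x).2 h) hx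
  exact hab ((hmem b).1 (this ▸ AddSubgroup.mem_top b) a)

theorem injective_centroidHom {γ : CentroidHom Q} (hγ : γ ≠ 0) : Injective γ := by
  have hker : IsTwoSidedIdealSub (γ : Q →+ Q).ker :=
    ⟨fun a ha x => by simp_all [map_mul_left], fun a ha x => by simp_all [map_mul_right]⟩
  have : (γ : Q →+ Q).ker = ⊥ := (hQ.2 _ hker).resolve_right fun h => hγ <| CentroidHom.ext
    fun z => AddMonoidHom.mem_ker.1 (h ▸ AddSubgroup.mem_top z)
  exact (injective_iff_map_eq_zero γ).2 fun z hz =>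
    by rwa [← AddSubgroup.mem_bot, ← this, AddMonoidHom.mem_ker]

theorem surjective_centroidHom {γ : CentroidHom Q} (hγ : γ ≠ 0) : Surjective γ := by
  have hrange : IsTwoSidedIdealSub (γ : Q →+ Q).range :=
    ⟨fun _ ⟨z, hz⟩ x => ⟨x * z, by simp [map_mul_left, ← hz]⟩,
      fun _ ⟨z, hz⟩ x => ⟨z * x, by simp [map_mul_right, ← hz]⟩⟩
  have : (γ : Q →+ Q).range = ⊤ := (hQ.2 _ hrange).resolve_left fun h => hγ <| CentroidHom.ext
    fun z => by
      simpa [h] using (AddMonoidHom.mem_range.2 ⟨z, rfl⟩ : γ z ∈ (γ : Q →+ Q).range)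
  exact fun z => AddMonoidHom.mem_range.1 (this ▸ AddSubgroup.mem_top z)

theorem closure_ad_mul_eq_top {a : Q} (ha : ∃ y, ad a y ≠ 0) :
    AddSubgroup.closure {z | ∃ y v, ad a y * v = z} = ⊤ := by
  have hideal : IsTwoSidedIdealSub (AddSubgroup.closure {z | ∃ y v, ad a y * v = z}) := by
    refine isTwoSidedIdealSub_closure ?_
    rintro _ ⟨y, v, rfl⟩ q
    refine ⟨?_, AddSubgroup.subset_closure ⟨y, v * q, (mul_assoc _ _ _).symm⟩⟩
    rw [← mul_assoc, mul_ad, sub_mul, mul_assoc]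
    exact sub_mem (AddSubgroup.subset_closure ⟨_, _, rfl⟩) (AddSubgroup.subset_closure ⟨_, _, rfl⟩)
  obtain ⟨y, hy⟩ := ha
  obtain ⟨v, hv⟩ : ∃ v, ad a y * v ≠ 0 := by
    by_contra! h
    exact hy (hQ.eq_zero_of_forall_mul_right_eq_zero h)
  exact hQ.eq_top_of_mem hideal (AddSubgroup.subset_closure ⟨y, v, rfl⟩) hv

theorem exists_centroidHom_ad_mul {a b : Q}
    (hab : ∀ x w y, ad a x * w * ad b y = ad b x * w * ad a y) (ha : ∃ y, ad a y ≠ 0) :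
    ∃ γ : CentroidHom Q, ∀ y v, γ (ad a y * v) = ad b y * v := by
  have hdom : ∀ z, ∃ g, (z, g) ∈ adGraph a b := by
    have : AddSubgroup.closure {z | ∃ y v, ad a y * v = z} ≤
        (adGraph a b).map (AddMonoidHom.fst Q Q) := by
      rw [AddSubgroup.closure_le]
      rintro _ ⟨y, v, rfl⟩
      exact ⟨_, mk_mem_adGraph a b y v, rfl⟩
    rw [hQ.closure_ad_mul_eq_top ha] at this
    intro z
    obtain ⟨p, hp, rfl⟩ := this (AddSubgroup.mem_top z)
    exact ⟨p.2, hp⟩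
  have hfun : ∀ g, ((0 : Q), g) ∈ adGraph a b → g = 0 := fun g hg =>
    hQ.eq_zero_of_forall_mul_left_eq_zero fun q => by
      obtain ⟨g', hg'⟩ := hdom q
      simpa using fst_mul_snd_eq_of_mem_adGraph hab hg hg'
  obtain ⟨γ, hγ⟩ := exists_centroidHom_of_graph _ (fun q _ => diag_mul_mem_adGraph q)
    (fun q _ => mul_diag_mem_adGraph q) hdom hfun
  exact ⟨γ, fun y v => hγ _ (mk_mem_adGraph a b y v)⟩

variable (hQ₁ : ¬∃ e : Q, ∀ x : Q, e * x = x ∧ x * e = x)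
include hQ₁

theorem centroidHom_eq_zero_of_eq_mul {γ : CentroidHom Q} {c : Q} (hγc : ∀ x, γ x = c * x) :
    γ = 0 := by
  by_contra hγ
  have hc : ∀ q, c * q = q * c := fun q => sub_eq_zero.mp <|
    hQ.eq_zero_of_forall_mul_right_eq_zero fun w => by
      rw [sub_mul, mul_assoc, ← hγc, map_mul_left, hγc, ← mul_assoc, sub_self]
  obtain ⟨e, he⟩ := hQ.surjective_centroidHom hγ c
  rw [hγc] at he
  refine hQ₁ ⟨e, fun x => ⟨?_, ?_⟩⟩ <;> refine sub_eq_zero.mp (hQ.injective_centroidHom hγ ?_)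
  · rw [map_sub, hγc, hγc, ← mul_assoc, he, sub_self, map_zero]
  · rw [map_sub, hγc, hγc, ← mul_assoc, hc, mul_assoc, he, sub_self, map_zero]

theorem eq_zero_of_forall_mul_comm {z : Q} (hz : ∀ q, z * q = q * z) : z = 0 := by
  let γ := CentroidHom.centerToCentroid ⟨z, Semigroup.mem_center_iff.mpr fun q => (hz q).symm⟩
  have hγ : γ = 0 := hQ.centroidHom_eq_zero_of_eq_mul hQ₁ fun x => rfl
  exact hQ.eq_zero_of_forall_mul_right_eq_zero fun q => congr($hγ q)

theorem mul_self_eq_zero_of_ad_cube (h2 : ∀ z : Q, 2 • z = 0 → z = 0)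
    (h3 : ∀ z : Q, 3 • z = 0 → z = 0) {a : Q} (ha : ∀ x, ad a (ad a (ad a x)) = 0) :
    a * a = 0 := by
  obtain hcent | hcent := forall_or_exists_not fun y => ad a y = 0
  · rw [hQ.eq_zero_of_forall_mul_comm hQ₁ fun q => sub_eq_zero.mp (hcent q), zero_mul]
  obtain ⟨γ, hγ⟩ := hQ.exists_centroidHom_ad_mul (ad_mul_mul_ad_mul_self ha h2 h3) hcent
  -- Heuristically `a = λ + n` with `λ` central and `n² = 0`; then `γ = 2λ` and
  -- `4 γ(a) - 4 a² = 4λ²`.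
  have hγγ : ∀ z, (γ * γ) z = (4 • γ a - 4 • (a * a)) * z := by
    have := AddMonoidHom.eq_of_eqOn_dense (hQ.closure_ad_mul_eq_top hcent)
      (f := ((γ * γ : CentroidHom Q) : Q →+ Q)) (g := AddMonoidHom.mulLeft (4 • γ a - 4 • (a * a)))
      (by
        rintro _ ⟨y, v, rfl⟩
        have hγa : γ a * (ad a y * v) = ad (a * a) (a * y) * v := by
          rw [← map_mul_right, self_mul_ad_mul, hγ]
        simp only [AddMonoidHom.coe_coe, CentroidHom.mul_apply, AddMonoidHom.coe_mulLeft, hγ,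
          ad_mul_self a y, ad_mul_self_ad_add_mul ha, sub_mul, smul_mul_assoc, hγa, mul_assoc])
    exact fun z => congr($this z)
  have hγ0 : γ = 0 := by
    by_contra hne
    have hγγ0 := hQ.centroidHom_eq_zero_of_eq_mul hQ₁ hγγ
    exact hne <| CentroidHom.ext fun z =>
      hQ.injective_centroidHom hne (by simpa using congr($hγγ0 z))
  have hcomm : ∀ y, ad (a * a) y = 0 := fun y =>
    hQ.eq_zero_of_forall_mul_right_eq_zero fun v => by rw [← hγ, hγ0, CentroidHom.zero_apply]
  exact hQ.eq_zero_of_forall_mul_comm hQ₁ fun q => sub_eq_zero.mp (hcomm q)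

end IsSimpleNonUnitalRing

end InnerIdeal

open InnerIdeal

section

variable {Q : Type*} [NonUnitalRing Q]

theorem IsAbelianLieInner.ad_cube_eq_zero {B : AddSubgroup Q} (hB : IsAbelianLieInner B)
    {b : Q} (hb : b ∈ B) (x : Q) : ad b (ad b (ad b x)) = 0 := by
  rw [← neg_eq_zero, ← hB.1 b hb _ (hB.2 b hb x b hb)]
  simp only [ad]; noncomm_ring

theorem IsAbelianLieInner.mul_eq_zero_of_mul_self_eq_zero {B : AddSubgroup Q}
    (hB : IsAbelianLieInner B) (h2 : ∀ z : Q, 2 • z = 0 → z = 0) (hsq : ∀ b ∈ B, b * b = 0)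
    {b c : Q} (hb : b ∈ B) (hc : c ∈ B) : b * c = 0 := by
  refine h2 _ ?_
  have e : 2 • (b * c) = ((b + c) * (b + c) - b * b - c * c) + (b * c - c * b) := by noncomm_ring
  rw [e, hsq _ (add_mem hb hc), hsq b hb, hsq c hc, hB.1 b hb c hc]
  simp

theorem IsAbelianLieInner.mul_eq_zero (hQ : IsSimpleNonUnitalRing Q)
    (hQ₁ : ¬∃ e : Q, ∀ x : Q, e * x = x ∧ x * e = x) (h2 : ∀ z : Q, 2 • z = 0 → z = 0)
    (h3 : ∀ z : Q, 3 • z = 0 → z = 0) {B : AddSubgroup Q} (hB : IsAbelianLieInner B) :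
    ∀ b ∈ B, ∀ c ∈ B, b * c = 0 := fun _ hb _ hc =>
  hB.mul_eq_zero_of_mul_self_eq_zero h2
    (fun _ hb => hQ.mul_self_eq_zero_of_ad_cube hQ₁ h2 h3 (hB.ad_cube_eq_zero hb)) hb hc

theorem IsRegInner.isAbelianLieInner {B : AddSubgroup Q} (hB : IsRegInner B) :
    IsAbelianLieInner B := by
  refine ⟨fun b hb c hc => by rw [hB.2 b hb c hc, hB.2 c hc b hb, sub_zero], fun b hb x c hc => ?_⟩
  have e : (b * x - x * b) * c - c * (b * x - x * b) =
      (b * x * c + c * x * b) - (x * (b * c) + (c * b) * x) := by noncomm_ring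
  rw [e, hB.2 b hb c hc, hB.2 c hc b hb, mul_zero, zero_mul, add_zero, sub_zero]
  exact add_mem (hB.1 b hb x c hc) (hB.1 c hc x b hb)

def innerClosure (S : Set Q) : AddSubgroup Q :=
  AddSubgroup.closure (S ∪ {z | ∃ s ∈ S, ∃ x, ∃ t ∈ S, s * x * t = z})

theorem subset_innerClosure (S : Set Q) : S ⊆ innerClosure S :=
  fun _ hs => AddSubgroup.subset_closure (Or.inl hs)

theorem mul_mul_mem_innerClosure {S : Set Q} {u v : Q} (hu : u ∈ innerClosure S)
    (hv : v ∈ innerClosure S) (x : Q) : u * x * v ∈ innerClosure S := by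
  induction hu, hv using AddSubgroup.closure_induction₂ with
  | mem s t hs ht =>
    refine AddSubgroup.subset_closure (Or.inr ?_)
    rcases hs with hs | ⟨s, hs, y, s', -, rfl⟩ <;> rcases ht with ht | ⟨t', -, z, t, ht, rfl⟩
    exacts [⟨s, hs, x, t, ht, rfl⟩, ⟨s, hs, x * t' * z, t, ht, by noncomm_ring⟩,
      ⟨s, hs, y * s' * x, t, ht, by noncomm_ring⟩, ⟨s, hs, y * s' * x * t' * z, t, ht, by noncomm_ring⟩]
  | zero_left | zero_right => simp
  | add_left _ _ _ _ _ _ h h' => rw [add_mul, add_mul]; exact add_mem h h'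
  | add_right _ _ _ _ _ _ h h' => rw [mul_add]; exact add_mem h h'
  | neg_left _ _ _ _ h => rw [neg_mul, neg_mul]; exact neg_mem h
  | neg_right _ _ _ _ h => rw [mul_neg]; exact neg_mem h

theorem isRegInner_innerClosure {S : Set Q} (hS : ∀ s ∈ S, ∀ t ∈ S, s * t = 0) :
    IsRegInner (innerClosure S) := by
  refine ⟨fun u hu x v hv => mul_mul_mem_innerClosure hu hv x, fun u hu v hv => ?_⟩
  induction hu, hv using AddSubgroup.closure_induction₂ with
  | mem s t hs ht =>
    rcases hs with hs | ⟨s, -, y, s', hs', rfl⟩ <;> rcases ht with ht | ⟨t', ht', z, t, -, rfl⟩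
    · exact hS s hs t ht
    · rw [← mul_assoc, ← mul_assoc, hS s hs t' ht', zero_mul, zero_mul]
    · rw [mul_assoc, hS s' hs' t ht, mul_zero]
    · rw [mul_assoc, ← mul_assoc s', ← mul_assoc s', hS s' hs' t' ht', zero_mul, zero_mul,
        mul_zero]
  | zero_left | zero_right => simp
  | add_left | add_right | neg_left | neg_right => simp_all [add_mul, mul_add]

theorem IsMaxZeroProduct.isMaxRegInner {B : AddSubgroup Q} (h : IsMaxZeroProduct (B : Set Q)) :
    IsMaxRegInner B := by
  have hreg := isRegInner_innerClosure h.1.2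
  have heq : (B : Set Q) = innerClosure (B : Set Q) :=
    h.2 _ ⟨⟨0, zero_mem _⟩, hreg.2⟩ (subset_innerClosure _)
  refine ⟨⟨fun b hb x c hc => ?_, h.1.2⟩, fun B' hB' hle => SetLike.coe_injective ?_⟩
  · rw [← SetLike.mem_coe, heq]
    exact hreg.1 b (subset_innerClosure _ hb) x c (subset_innerClosure _ hc)
  · exact h.2 _ ⟨⟨0, zero_mem _⟩, hB'.2⟩ hle

theorem IsMaxRegInner.isMaxZeroProduct {B : AddSubgroup Q} (h : IsMaxRegInner B) :
    IsMaxZeroProduct (B : Set Q) := by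
  refine ⟨⟨⟨0, zero_mem B⟩, h.1.2⟩, fun T hT hBT => hBT.antisymm ?_⟩
  rw [h.2 _ (isRegInner_innerClosure hT.2) (hBT.trans (subset_innerClosure T))]
  exact subset_innerClosure T

theorem IsMaxRegInner.isMaxAbelianLieInner {B : AddSubgroup Q} (h : IsMaxRegInner B)
    (hsq : ∀ B' : AddSubgroup Q, IsAbelianLieInner B' → ∀ b ∈ B', ∀ c ∈ B', b * c = 0) :
    IsMaxAbelianLieInner B := by
  refine ⟨h.1.isAbelianLieInner, fun B' hB' hle => hle.antisymm ?_⟩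
  rw [h.2 _ (isRegInner_innerClosure (hsq B' hB')) (hle.trans (subset_innerClosure _))]
  exact subset_innerClosure _

theorem IsMaxAbelianLieInner.isMaxRegInner {B : AddSubgroup Q} (h : IsMaxAbelianLieInner B)
    (hsq : ∀ B' : AddSubgroup Q, IsAbelianLieInner B' → ∀ b ∈ B', ∀ c ∈ B', b * c = 0) :
    IsMaxRegInner B := by
  have hreg := isRegInner_innerClosure (hsq B h.1)
  have heq : B = innerClosure B := h.2 _ hreg.isAbelianLieInner (subset_innerClosure _)
  exact ⟨heq ▸ hreg, fun B' hB' hle => h.2 B' hB'.isAbelianLieInner hle⟩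

end

/-- Corollary 4.10: for a non-unital simple ring `Q` of characteristic not `2` or `3` and an
additive subgroup `B` of `Q`, the following are equivalent: `B` is a maximal zero product
subset, `B` is a maximal regular inner ideal, and `B` is a maximal abelian inner ideal of the
Lie ring `Q⁽⁻⁾`. -/
theorem maxZeroProduct_iff_maxRegInner_iff_maxAbelianLieInner
    {Q : Type*} [NonUnitalRing Q]
    (hsimple : (∃ a b : Q, a * b ≠ 0) ∧
      ∀ I : AddSubgroup Q, IsTwoSidedIdealSub I → I = ⊥ ∨ I = ⊤)
    (hnonunital : ¬∃ e : Q, ∀ x : Q, e * x = x ∧ x * e = x)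
    (hchar : ∀ x : Q, x ≠ 0 → x + x ≠ 0 ∧ x + x + x ≠ 0)
    (B : AddSubgroup Q) :
    (IsMaxZeroProduct (B : Set Q) ↔ IsMaxRegInner B) ∧
      (IsMaxRegInner B ↔ IsMaxAbelianLieInner B) := by
  have h2 : ∀ z : Q, 2 • z = 0 → z = 0 := fun z hz => by
    by_contra h
    exact (hchar z h).1 (by rwa [two_nsmul] at hz)
  have h3 : ∀ z : Q, 3 • z = 0 → z = 0 := fun z hz => by
    by_contra h
    exact (hchar z h).2 (by rwa [three'_nsmul] at hz)
  have hsq := fun B' (hB' : IsAbelianLieInner B') => hB'.mul_eq_zero hsimple hnonunital h2 h3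
  exact ⟨⟨IsMaxZeroProduct.isMaxRegInner, IsMaxRegInner.isMaxZeroProduct⟩,
    ⟨fun h => h.isMaxAbelianLieInner hsq, fun h => h.isMaxRegInner hsq⟩⟩
end
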